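/- The linear map Z* : h^0 → ℝ sending the word z_{k_1} z_{k_2} ⋯ z_{k_n} (with k_1 ≥ 2) to ζ*(k_1,…,k_n) and 1 to 1 satisfies Z*(w_1 ⋆̄ w_2) = Z*(w_1) Z*(w_2) for all w_1, w_2 ∈ h^0. -/

import Mathlib

open MonoidAlgebra Finset

abbrev H : Type := MonoidAlgebra ℚ (FreeMonoid ℕ+)

noncomputable def word (w : List ℕ+) : H := MonoidAlgebra.single (FreeMonoid.ofList w) 1

noncomputable def z (k : ℕ+) : H := word [k]

noncomputable def st : List ℕ+ → List ℕ+ → H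
  | [], w => word w
  | k :: w1, [] => word (k :: w1)
  | k :: w1, l :: w2 =>
      z k * st w1 (l :: w2) + z l * st (k :: w1) w2 + z (k + l) * st w1 w2
termination_by a b => a.length + b.length
decreasing_by all_goals (simp; try omega)
noncomputable def stbar : List ℕ+ → List ℕ+ → H
  | [], w => word w
  | k :: w1, [] => word (k :: w1)
  | k :: w1, l :: w2 =>
      z k * stbar w1 (l :: w2) + z l * stbar (k :: w1) w2 - z (k + l) * stbar w1 w2
termination_by a b => a.length + b.length
decreasing_by all_goals (simp; try omega)

noncomputable def stuffleBar (x y : H) : H :=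
  Finsupp.sum x.coeff fun w1 c1 =>
    Finsupp.sum y.coeff fun w2 c2 =>
      (c1 * c2) • stbar (FreeMonoid.toList w1) (FreeMonoid.toList w2)

/-- The multiple zeta-star value ζ*(k₁,…,kₙ) = ∑_{m₁ ≥ m₂ ≥ ⋯ ≥ mₙ ≥ 1} ∏ᵢ mᵢ^{-kᵢ}. -/
noncomputable def mzvStar (ks : List ℕ) : ℝ :=
  ∑' m : {f : Fin ks.length → ℕ // (∀ i j : Fin ks.length, i < j → f j ≤ f i) ∧ ∀ i, 1 ≤ f i},
    ∏ i : Fin ks.length, (1 : ℝ) / (m.1 i : ℝ) ^ ks.get i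

/-- The linear evaluation map `Z*` sending a word `z_{k₁} ⋯ z_{kₙ}` to `ζ*(k₁,…,kₙ)`. -/
noncomputable def ZstarMap (x : H) : ℝ :=
  Finsupp.sum x.coeff fun w c => (c : ℝ) * mzvStar ((FreeMonoid.toList w).map fun k => (k : ℕ))

/-- Membership in the subalgebra `h⁰`: every word in the support is empty or starts with a
letter `z_k` with `k ≥ 2`. -/
def memH0 (x : H) : Prop :=
  ∀ w ∈ x.coeff.support, ∀ (k : ℕ+) (t : List ℕ+), FreeMonoid.toList w = k :: t → 2 ≤ (k : ℕ)

/-!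
Truncate the sums: `Z*_M` sends `z_{k₁} ⋯ z_{kₙ}` to the finite sum over
`M ≥ m₁ ≥ ⋯ ≥ mₙ ≥ 1`. Each truncation is exactly multiplicative for `⋆̄`: writing the
product of two such sums as the sum over the outer indices `m₁ ≥ n₁` plus the one over
`n₁ ≥ m₁` minus the diagonal reproduces the three terms of the recursion for `⋆̄`.
On `h⁰` the truncations converge to `Z*`, because the inner sums are bounded by
`(1 + log m)ⁿ` and `m⁻² (1 + log m)ⁿ` is summable, so the identity passes to the limit.
-/

open Filter Topology

def antitoneTuples (n M : ℕ) : Finset (Fin n → ℕ) :=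
  (Fintype.piFinset fun _ => Icc 1 M).filter fun f => ∀ i j : Fin n, i < j → f j ≤ f i

noncomputable def zetaStarTerm (ks : List ℕ) (f : Fin ks.length → ℕ) : ℝ :=
  ∏ i, (1 : ℝ) / (f i : ℝ) ^ ks.get i

noncomputable def zetaStarTrunc (ks : List ℕ) (M : ℕ) : ℝ :=
  ∑ f ∈ antitoneTuples ks.length M, zetaStarTerm ks f

lemma mem_antitoneTuples {n M : ℕ} {f : Fin n → ℕ} :
    f ∈ antitoneTuples n M ↔ (∀ i, f i ∈ Icc 1 M) ∧ ∀ i j : Fin n, i < j → f j ≤ f i := by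
  simp [antitoneTuples, Fintype.mem_piFinset]

lemma antitoneTuples_mono (n : ℕ) : Monotone (antitoneTuples n) := fun _ _ h _ hf => by
  rw [mem_antitoneTuples] at hf ⊢
  exact ⟨fun i => Icc_subset_Icc_right h (hf.1 i), hf.2⟩

lemma cons_mem_antitoneTuples {n M m : ℕ} {f : Fin n → ℕ} :
    Fin.cons m f ∈ antitoneTuples (n + 1) M ↔ m ∈ Icc 1 M ∧ f ∈ antitoneTuples n m := by
  simp only [mem_antitoneTuples, Fin.forall_fin_succ, Fin.cons_zero, Fin.cons_succ, mem_Icc,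
    Fin.succ_pos, Fin.succ_lt_succ_iff, Fin.not_lt_zero, IsEmpty.forall_iff,
    forall_const, true_and]
  constructor
  · rintro ⟨⟨hm, hf⟩, hmf, hanti⟩
    exact ⟨hm, fun i => ⟨(hf i).1, hmf i⟩, hanti⟩
  · rintro ⟨hm, hf, hanti⟩
    exact ⟨⟨hm, fun i => ⟨(hf i).1, (hf i).2.trans hm.2⟩⟩, fun i => (hf i).2, hanti⟩

lemma sum_antitoneTuples_succ {β : Type*} [AddCommMonoid β] (n M : ℕ)
    (g : (Fin (n + 1) → ℕ) → β) :
    ∑ F ∈ antitoneTuples (n + 1) M, g F =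
      ∑ m ∈ Icc 1 M, ∑ f ∈ antitoneTuples n m, g (Fin.cons m f) := by
  rw [sum_sigma']
  refine sum_nbij' (fun F => ⟨F 0, Fin.tail F⟩) (fun p => Fin.cons p.1 p.2) ?_ ?_ ?_ ?_ ?_
  · intro F hF
    rw [← Fin.cons_self_tail F, cons_mem_antitoneTuples] at hF
    simpa using hF
  · rintro ⟨m, f⟩ h
    simpa [cons_mem_antitoneTuples] using h
  · exact fun F _ => Fin.cons_self_tail F
  · rintro ⟨m, f⟩ _
    simp
  · exact fun F _ => by rw [Fin.cons_self_tail]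

@[simp] lemma zetaStarTrunc_nil (M : ℕ) : zetaStarTrunc [] M = 1 := by
  simp [zetaStarTrunc, zetaStarTerm, antitoneTuples, Finset.filter_true_of_mem]

lemma zetaStarTrunc_cons (k : ℕ) (t : List ℕ) (M : ℕ) :
    zetaStarTrunc (k :: t) M = ∑ m ∈ Icc 1 M, 1 / (m : ℝ) ^ k * zetaStarTrunc t m := by
  refine (sum_antitoneTuples_succ t.length M _).trans (sum_congr rfl fun m _ => ?_)
  rw [zetaStarTrunc, mul_sum]
  exact sum_congr rfl fun f _ => Fin.prod_univ_succ _

lemma zetaStarTrunc_nonneg (ks : List ℕ) (M : ℕ) : 0 ≤ zetaStarTrunc ks M :=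
  sum_nonneg fun _ _ => prod_nonneg fun _ _ => by positivity

lemma zetaStarTrunc_le_one_add_log_pow {ks : List ℕ} (hks : ∀ k ∈ ks, 1 ≤ k) (M : ℕ) :
    zetaStarTrunc ks M ≤ (1 + Real.log M) ^ ks.length := by
  induction ks generalizing M with
  | nil => simp
  | cons k t ih =>
    have hharm : ∑ m ∈ Icc 1 M, (m : ℝ)⁻¹ ≤ 1 + Real.log M := by
      simpa [harmonic_eq_sum_Icc] using harmonic_le_one_add_log M
    calc zetaStarTrunc (k :: t) M
        ≤ ∑ m ∈ Icc 1 M, (m : ℝ)⁻¹ * (1 + Real.log M) ^ t.length := by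
          rw [zetaStarTrunc_cons]
          refine sum_le_sum fun m hm => ?_
          have hm1 : (1 : ℝ) ≤ m := by exact_mod_cast (mem_Icc.1 hm).1
          have hlog : Real.log m ≤ Real.log M :=
            Real.log_le_log (by positivity) (by exact_mod_cast (mem_Icc.1 hm).2)
          refine mul_le_mul ?_ ((ih (fun x hx => hks x (List.mem_cons_of_mem _ hx)) m).trans ?_)
            (zetaStarTrunc_nonneg t m) (by positivity)
          · rw [← one_div]
            exact one_div_le_one_div_of_le (by positivity)
              (le_self_pow₀ hm1 (by have := hks k List.mem_cons_self; omega))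
          · exact pow_le_pow_left₀ (by linarith [Real.log_natCast_nonneg m]) (by linarith) _
      _ ≤ (1 + Real.log M) ^ (k :: t).length := by
          rw [← sum_mul, List.length_cons, pow_succ']
          exact mul_le_mul_of_nonneg_right hharm
            (pow_nonneg (by linarith [Real.log_natCast_nonneg M]) _)

lemma one_add_log_le {x ε : ℝ} (hx : 1 ≤ x) (hε : 0 < ε) :
    1 + Real.log x ≤ (1 + ε⁻¹) * x ^ ε := by
  have h1 : 1 ≤ x ^ ε := Real.one_le_rpow hx hε.le
  have h2 := Real.log_le_rpow_div (zero_le_one.trans hx) hε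
  rw [add_mul, one_mul, inv_mul_eq_div]
  linarith

lemma one_div_pow_mul_one_add_log_pow_le {k m : ℕ} (hk : 2 ≤ k) (hm : 1 ≤ m) (n : ℕ) :
    1 / (m : ℝ) ^ k * (1 + Real.log m) ^ n ≤ (2 * n + 3 : ℝ) ^ n * (m : ℝ) ^ (-(3 / 2) : ℝ) := by
  -- with `ε = 1 / (2n + 2)`, `(1 + log m)ⁿ ≤ (1 + ε⁻¹)ⁿ m^(nε)` and `nε ≤ 1/2`
  set ε : ℝ := 1 / (2 * n + 2) with hε
  have hm1 : (1 : ℝ) ≤ m := by exact_mod_cast hm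
  have hm0 : (0 : ℝ) < m := by positivity
  have hε0 : 0 < ε := by positivity
  have hεinv : 1 + ε⁻¹ = 2 * n + 3 := by rw [hε, one_div, inv_inv]; ring
  have hlog : (1 + Real.log m) ^ n ≤ (2 * n + 3 : ℝ) ^ n * (m : ℝ) ^ (1 / 2 : ℝ) := by
    calc (1 + Real.log m) ^ n ≤ ((1 + ε⁻¹) * (m : ℝ) ^ ε) ^ n :=
          pow_le_pow_left₀ (by linarith [Real.log_natCast_nonneg m]) (one_add_log_le hm1 hε0) _
      _ = (2 * n + 3 : ℝ) ^ n * (m : ℝ) ^ (ε * n) := by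
          rw [mul_pow, hεinv, Real.rpow_mul hm0.le, Real.rpow_natCast]
      _ ≤ (2 * n + 3 : ℝ) ^ n * (m : ℝ) ^ (1 / 2 : ℝ) := by
          refine mul_le_mul_of_nonneg_left (Real.rpow_le_rpow_of_exponent_le hm1 ?_)
            (by positivity)
          rw [hε, div_mul_eq_mul_div, one_mul, div_le_iff₀ (by positivity)]
          linarith
  have hpow : 1 / (m : ℝ) ^ k ≤ (m : ℝ) ^ (-2 : ℝ) := by
    rw [Real.rpow_neg hm0.le, ← one_div, show (2 : ℝ) = ((2 : ℕ) : ℝ) by norm_num,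
      Real.rpow_natCast]
    exact one_div_le_one_div_of_le (by positivity) (pow_le_pow_right₀ hm1 hk)
  calc 1 / (m : ℝ) ^ k * (1 + Real.log m) ^ n
      ≤ (m : ℝ) ^ (-2 : ℝ) * ((2 * n + 3 : ℝ) ^ n * (m : ℝ) ^ (1 / 2 : ℝ)) :=
        mul_le_mul hpow hlog (pow_nonneg (by linarith [Real.log_natCast_nonneg m]) _)
          (by positivity)
    _ = (2 * n + 3 : ℝ) ^ n * (m : ℝ) ^ (-(3 / 2) : ℝ) := by
        rw [mul_left_comm, ← Real.rpow_add hm0]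
        norm_num

lemma exists_zetaStarTrunc_le {ks : List ℕ} (h1 : ∀ k ∈ ks, 1 ≤ k)
    (h2 : ∀ k ∈ ks.head?, 2 ≤ k) :
    ∃ c, ∀ M, zetaStarTrunc ks M ≤ c := by
  cases ks with
  | nil => exact ⟨1, by simp⟩
  | cons k t =>
    have hk : 2 ≤ k := h2 k rfl
    have ht : ∀ x ∈ t, 1 ≤ x := fun x hx => h1 x (List.mem_cons_of_mem _ hx)
    set C : ℝ := (2 * t.length + 3 : ℝ) ^ t.length
    have hsum : Summable fun m : ℕ => (m : ℝ) ^ (-(3 / 2) : ℝ) :=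
      Real.summable_nat_rpow.2 (by norm_num)
    refine ⟨C * ∑' m : ℕ, (m : ℝ) ^ (-(3 / 2) : ℝ), fun M => ?_⟩
    calc zetaStarTrunc (k :: t) M
        ≤ ∑ m ∈ Icc 1 M, C * (m : ℝ) ^ (-(3 / 2) : ℝ) := by
          rw [zetaStarTrunc_cons]
          refine sum_le_sum fun m hm => ?_
          exact (mul_le_mul_of_nonneg_left (zetaStarTrunc_le_one_add_log_pow ht m)
            (by positivity)).trans
            (one_div_pow_mul_one_add_log_pow_le hk (mem_Icc.1 hm).1 _)
      _ ≤ C * ∑' m : ℕ, (m : ℝ) ^ (-(3 / 2) : ℝ) := by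
          rw [← mul_sum]
          exact mul_le_mul_of_nonneg_left
            (hsum.sum_le_tsum _ fun m _ => by positivity) (by positivity)

lemma tendsto_sum_tsum_of_nonneg {ι : Type*} {f : ι → ℝ} (hf : 0 ≤ f) {s : ℕ → Finset ι}
    (hs : Monotone s) (hexh : ∀ i, ∃ M, i ∈ s M) {c : ℝ} (hc : ∀ M, ∑ i ∈ s M, f i ≤ c) :
    Tendsto (fun M => ∑ i ∈ s M, f i) atTop (𝓝 (∑' i, f i)) := by
  have hst := hs.tendsto_atTop_finset hexh
  have hsum : Summable f := summable_of_sum_le hf fun u => by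
    obtain ⟨M, hM⟩ := (tendsto_atTop.1 hst u).exists
    exact (sum_le_sum_of_subset_of_nonneg hM fun i _ _ => hf i).trans (hc M)
  exact hsum.hasSum.comp hst

lemma tendsto_zetaStarTrunc {ks : List ℕ} (h1 : ∀ k ∈ ks, 1 ≤ k)
    (h2 : ∀ k ∈ ks.head?, 2 ≤ k) :
    Tendsto (zetaStarTrunc ks) atTop (𝓝 (mzvStar ks)) := by
  classical
  let P : (Fin ks.length → ℕ) → Prop := fun f =>
    (∀ i j : Fin ks.length, i < j → f j ≤ f i) ∧ ∀ i, 1 ≤ f i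
  have hP : ∀ M, ∀ f ∈ antitoneTuples ks.length M, P f := fun M f hf => by
    rw [mem_antitoneTuples] at hf
    exact ⟨hf.2, fun i => (mem_Icc.1 (hf.1 i)).1⟩
  have hsub : zetaStarTrunc ks = fun M =>
      ∑ f ∈ (antitoneTuples ks.length M).subtype P, zetaStarTerm ks f :=
    funext fun M => (sum_subtype_of_mem _ (hP M)).symm
  obtain ⟨c, hc⟩ := exists_zetaStarTrunc_le h1 h2
  rw [hsub] at hc ⊢
  refine tendsto_sum_tsum_of_nonneg (f := fun f : Subtype P => zetaStarTerm ks f.1)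
    (fun f => prod_nonneg fun _ _ => by positivity)
    (fun _ _ h => subtype_mono (antitoneTuples_mono _ h)) (fun f => ⟨univ.sup f.1, ?_⟩) hc
  rw [mem_subtype, mem_antitoneTuples]
  exact ⟨fun i => mem_Icc.2 ⟨f.2.2 i, le_sup (mem_univ i)⟩, f.2.1⟩

section EvalLinear

variable {G : Type*}

noncomputable def evalLinear (φ : G → ℝ) : MonoidAlgebra ℚ G →+ ℝ :=
  (Finsupp.liftAddHom fun w =>
    (AddMonoidHom.mulRight (φ w)).comp (Rat.castHom ℝ).toAddMonoidHom).comp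
      MonoidAlgebra.coeffAddEquiv.toAddMonoidHom

lemma evalLinear_apply (φ : G → ℝ) (x : MonoidAlgebra ℚ G) :
    evalLinear φ x = x.coeff.sum fun w c => (c : ℝ) * φ w := rfl

lemma evalLinear_single (φ : G → ℝ) (w : G) (c : ℚ) :
    evalLinear φ (MonoidAlgebra.single w c) = c * φ w :=
  Finsupp.liftAddHom_apply_single _ _ _

lemma tendsto_evalLinear {φ : ℕ → G → ℝ} {ψ : G → ℝ} {x : MonoidAlgebra ℚ G}
    (h : ∀ w ∈ x.coeff.support, Tendsto (fun M => φ M w) atTop (𝓝 (ψ w))) :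
    Tendsto (fun M => evalLinear (φ M) x) atTop (𝓝 (evalLinear ψ x)) :=
  tendsto_finsetSum _ fun w hw => (h w hw).const_mul _

end EvalLinear

def wordIndex (w : FreeMonoid ℕ+) : List ℕ := (FreeMonoid.toList w).map PNat.val

lemma ZstarMap_eq_evalLinear : ZstarMap = evalLinear fun w => mzvStar (wordIndex w) := by
  -- the list coercion inside `ZstarMap` elaborates to a `flatMap`
  funext x
  simp [ZstarMap, evalLinear_apply, wordIndex, List.map_eq_flatMap]

noncomputable def ZstarTrunc (M : ℕ) : H →+ ℝ :=
  evalLinear fun w => zetaStarTrunc (wordIndex w) M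

lemma z_mul_single (k : ℕ+) (w : FreeMonoid ℕ+) (c : ℚ) :
    z k * MonoidAlgebra.single w c = MonoidAlgebra.single (FreeMonoid.of k * w) c := by
  rw [z, word, MonoidAlgebra.single_mul_single, one_mul]
  rfl

lemma word_cons (k : ℕ+) (w : List ℕ+) : word (k :: w) = z k * word w := by
  rw [word, word, z_mul_single, FreeMonoid.ofList_cons]

lemma ZstarTrunc_word_nil (M : ℕ) : ZstarTrunc M (word []) = 1 := by
  simp [ZstarTrunc, word, evalLinear_single, wordIndex]

lemma ZstarTrunc_z_mul (k : ℕ+) (u : H) (M : ℕ) :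
    ZstarTrunc M (z k * u) = ∑ m ∈ Icc 1 M, 1 / (m : ℝ) ^ (k : ℕ) * ZstarTrunc m u := by
  induction u using MonoidAlgebra.induction_linear with
  | zero => simp
  | add u v hu hv => simp only [mul_add, map_add, hu, hv, ← sum_add_distrib]
  | single w c =>
    simp only [z_mul_single, ZstarTrunc, evalLinear_single]
    rw [show wordIndex (FreeMonoid.of k * w) = (k : ℕ) :: wordIndex w from rfl,
      zetaStarTrunc_cons, mul_sum]
    exact sum_congr rfl fun m _ => by ring

lemma sum_Icc_mul_sum_Icc {R : Type*} [CommRing R] (a b : ℕ → R) (M : ℕ) :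
    (∑ m ∈ Icc 1 M, a m) * (∑ n ∈ Icc 1 M, b n) =
      ∑ m ∈ Icc 1 M, a m * ∑ n ∈ Icc 1 m, b n + ∑ n ∈ Icc 1 M, (∑ m ∈ Icc 1 n, a m) * b n -
        ∑ m ∈ Icc 1 M, a m * b m := by
  induction M with
  | zero => simp
  | succ M ih =>
    simp only [sum_Icc_succ_top (Nat.le_add_left 1 M)]
    linear_combination ih

lemma ZstarTrunc_stbar : ∀ (u v : List ℕ+) (M : ℕ),
    ZstarTrunc M (stbar u v) = ZstarTrunc M (word u) * ZstarTrunc M (word v)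
  | [], v, M => by rw [stbar, ZstarTrunc_word_nil, one_mul]
  | k :: u, [], M => by rw [stbar, ZstarTrunc_word_nil, mul_one]
  | k :: u, l :: v, M => by
    have ih₁ := ZstarTrunc_stbar u (l :: v)
    have ih₂ := ZstarTrunc_stbar (k :: u) v
    have ih₃ := ZstarTrunc_stbar u v
    rw [stbar, map_sub, map_add, ZstarTrunc_z_mul, ZstarTrunc_z_mul, ZstarTrunc_z_mul,
      word_cons, word_cons, ZstarTrunc_z_mul, ZstarTrunc_z_mul, sum_Icc_mul_sum_Icc]
    simp only [ih₁, ih₂, ih₃, word_cons, ZstarTrunc_z_mul, PNat.add_coe, pow_add]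
    congr 1
    · congr 1 <;> exact sum_congr rfl fun m _ => by ring
    · exact sum_congr rfl fun m _ => by field_simp
termination_by u v => u.length + v.length

lemma map_eq_sum_word (E : H →+ ℝ) (x : H) :
    E x = x.coeff.sum fun w c => (c : ℝ) * E (word (FreeMonoid.toList w)) := by
  conv_lhs => rw [← MonoidAlgebra.sum_coeff_single x]
  rw [map_finsuppSum]
  refine Finsupp.sum_congr fun w _ => ?_
  rw [word, FreeMonoid.ofList_toList, ← Rat.smul_def, ← map_rat_smul, MonoidAlgebra.smul_single,
    smul_eq_mul, mul_one]

lemma map_stuffleBar_of_map_stbar (E : H →+ ℝ)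
    (hE : ∀ u v, E (stbar u v) = E (word u) * E (word v)) (x y : H) :
    E (stuffleBar x y) = E x * E y := by
  rw [map_eq_sum_word E x, map_eq_sum_word E y, Finsupp.sum_mul, stuffleBar, map_finsuppSum]
  refine Finsupp.sum_congr fun w₁ _ => ?_
  rw [map_finsuppSum, Finsupp.mul_sum]
  refine Finsupp.sum_congr fun w₂ _ => ?_
  rw [map_rat_smul, hE, Rat.smul_def, Rat.cast_mul]
  ring

lemma ZstarTrunc_stuffleBar (M : ℕ) (x y : H) :
    ZstarTrunc M (stuffleBar x y) = ZstarTrunc M x * ZstarTrunc M y :=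
  map_stuffleBar_of_map_stbar _ (fun u v => ZstarTrunc_stbar u v M) x y

def admissibleWords : Set (FreeMonoid ℕ+) :=
  {w | ∀ k ∈ (FreeMonoid.toList w).head?, 2 ≤ (k : ℕ)}

noncomputable abbrev H0 : Submodule ℚ H := MonoidAlgebra.supported ℚ ℚ admissibleWords

lemma memH0_iff (x : H) : memH0 x ↔ x ∈ H0 := by
  simp only [memH0, MonoidAlgebra.mem_supported, Set.subset_def, Finset.mem_coe, admissibleWords,
    Set.mem_ofPred_eq]
  refine forall₂_congr fun w _ => ?_
  cases FreeMonoid.toList w <;> simp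

lemma word_mem_H0 {w : List ℕ+} (hw : ∀ k ∈ w.head?, 2 ≤ (k : ℕ)) : word w ∈ H0 := by
  rw [MonoidAlgebra.mem_supported, word, MonoidAlgebra.coeff_single]
  intro v hv
  rw [Finset.mem_singleton.1 (Finsupp.support_single_subset hv)]
  simpa [admissibleWords] using hw

lemma z_mul_mem_H0 {k : ℕ+} (hk : 2 ≤ (k : ℕ)) (u : H) : z k * u ∈ H0 := by
  classical
  rw [MonoidAlgebra.mem_supported]
  intro v hv
  obtain ⟨w, -, rfl⟩ :=
    Finset.mem_image.1 (MonoidAlgebra.support_coeff_single_mul_subset u _ _ hv)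
  simpa [admissibleWords] using hk

lemma stbar_mem_H0 : ∀ {u v : List ℕ+},
    (∀ k ∈ u.head?, 2 ≤ (k : ℕ)) → (∀ k ∈ v.head?, 2 ≤ (k : ℕ)) → stbar u v ∈ H0
  | [], v, _, hv => by rw [stbar]; exact word_mem_H0 hv
  | k :: u, [], hu, _ => by rw [stbar]; exact word_mem_H0 hu
  | k :: u, l :: v, hu, hv => by
    have hk : 2 ≤ (k : ℕ) := hu k rfl
    have hl : 2 ≤ (l : ℕ) := hv l rfl
    rw [stbar]
    exact H0.sub_mem (H0.add_mem (z_mul_mem_H0 hk _) (z_mul_mem_H0 hl _))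
      (z_mul_mem_H0 (by rw [PNat.add_coe]; omega) _)

lemma stuffleBar_mem_H0 {x y : H} (hx : x ∈ H0) (hy : y ∈ H0) : stuffleBar x y ∈ H0 :=
  Submodule.finsuppSum_mem _ _ _ _ fun _ hw₁ => Submodule.finsuppSum_mem _ _ _ _ fun _ hw₂ =>
    H0.smul_mem _ (stbar_mem_H0 (hx (Finsupp.mem_support_iff.2 hw₁))
      (hy (Finsupp.mem_support_iff.2 hw₂)))

lemma tendsto_ZstarTrunc {x : H} (hx : x ∈ H0) :
    Tendsto (fun M => ZstarTrunc M x) atTop (𝓝 (ZstarMap x)) := by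
  rw [ZstarMap_eq_evalLinear]
  refine tendsto_evalLinear fun w hw => tendsto_zetaStarTrunc ?_ ?_
  · simp only [wordIndex, List.mem_map]
    rintro _ ⟨a, -, rfl⟩
    exact a.pos
  · simpa [wordIndex, admissibleWords] using hx hw

theorem ZstarMap_stuffleBar (x y : H) (hx : memH0 x) (hy : memH0 y) :
    ZstarMap (stuffleBar x y) = ZstarMap x * ZstarMap y := by
  rw [memH0_iff] at hx hy
  refine tendsto_nhds_unique (tendsto_ZstarTrunc (stuffleBar_mem_H0 hx hy)) ?_
  simp only [ZstarTrunc_stuffleBar]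
  exact (tendsto_ZstarTrunc hx).mul (tendsto_ZstarTrunc hy)
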